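/- arXiv:2604.15509 — 2 statements merged into one kernel-verified Lean document; each statement's English description precedes it below -/
import Mathlib

section
/- Let c₁,…,c₆ ∈ ℝ² and d₁,d₂,d₃ ∈ ℝ be coefficients of v(x,y) = c₁ + c₂x + c₃y + c₄x² + c₅y² + c₆xy (vector-valued) and q(x,y) = d₁ + d₂x + d₃y. Suppose: (a) v(η_k,0) = 0 for three distinct reals η₁,η₂,η₃; (b) the traction (∇v + ∇vᵀ − qI)·(0,1)ᵀ vanishes at (ζ_k, 0) for two distinct reals ζ₁,ζ₂; (c) div v vanishes at (ξ₁,0), (ξ₂,0) with ξ₁ ≠ ξ₂ and at (0, ξ₃) with ξ₃ ≠ 0; (d) Δv − c²v − ∇q = 0 at the origin, for some constant c² ≥ 0. Then all coefficients vanish: c₁ = ⋯ = c₆ = 0 and d₁ = d₂ = d₃ = 0. -/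
/-!
On the line `y = 0` every collocation condition is a univariate polynomial identity of degree
at most two in the node, so distinct nodes force its coefficients to vanish. The unknowns are
peeled off in order: the Dirichlet data kill `c₁, c₂, c₄`; then the shear traction and the
divergence on the line kill `c₃, c₆`; the normal traction kills `d₁, d₂`; the divergence at
`(0, ξ₃)` kills the second component of `c₅`, and the momentum equation at the origin (where
`v` already vanishes) kills the first component of `c₅` and `d₃`.
-/

section Domain

variable {R : Type*} [CommRing R] [IsDomain R]

theorem affine_coeffs_eq_zero {a b x₁ x₂ : R} (hx : x₁ ≠ x₂)
    (h₁ : a + b * x₁ = 0) (h₂ : a + b * x₂ = 0) : a = 0 ∧ b = 0 := by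
  have hb : b = 0 :=
    (mul_eq_zero.1 (by linear_combination h₁ - h₂ : b * (x₁ - x₂) = 0)).resolve_right
      (sub_ne_zero.2 hx)
  exact ⟨by linear_combination h₁ - x₁ * hb, hb⟩

theorem quadratic_coeffs_eq_zero {a b c x₁ x₂ x₃ : R}
    (h₁₂ : x₁ ≠ x₂) (h₁₃ : x₁ ≠ x₃) (h₂₃ : x₂ ≠ x₃)
    (h₁ : a + b * x₁ + c * x₁ ^ 2 = 0) (h₂ : a + b * x₂ + c * x₂ ^ 2 = 0)
    (h₃ : a + b * x₃ + c * x₃ ^ 2 = 0) : a = 0 ∧ b = 0 ∧ c = 0 := by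
  -- divided differences: `(p x₁ - p xᵢ) / (x₁ - xᵢ)` is affine in `xᵢ`
  have d₂ : b + c * x₁ + c * x₂ = 0 :=
    (mul_eq_zero.1 (by linear_combination h₁ - h₂ :
      (b + c * x₁ + c * x₂) * (x₁ - x₂) = 0)).resolve_right (sub_ne_zero.2 h₁₂)
  have d₃ : b + c * x₁ + c * x₃ = 0 :=
    (mul_eq_zero.1 (by linear_combination h₁ - h₃ :
      (b + c * x₁ + c * x₃) * (x₁ - x₃) = 0)).resolve_right (sub_ne_zero.2 h₁₃)
  obtain ⟨hbc, hc⟩ := affine_coeffs_eq_zero h₂₃ d₂ d₃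
  have hb : b = 0 := by linear_combination hbc - x₁ * hc
  exact ⟨by linear_combination h₁ - x₁ * hb - x₁ ^ 2 * hc, hb, hc⟩

end Domain

theorem hasDerivAt_quadratic (a b c t : ℝ) :
    HasDerivAt (fun u => a + b * u + c * u ^ 2) (b + 2 * c * t) t := by
  have := (((hasDerivAt_id' t).const_mul b).const_add a).add ((hasDerivAt_pow 2 t).const_mul c)
  exact this.congr_deriv (by push_cast; ring)

theorem deriv_quadratic (a b c t : ℝ) :
    deriv (fun u => a + b * u + c * u ^ 2) t = b + 2 * c * t :=
  (hasDerivAt_quadratic a b c t).deriv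

theorem iteratedDeriv_two_quadratic (a b c t : ℝ) :
    iteratedDeriv 2 (fun u => a + b * u + c * u ^ 2) t = 2 * c := by
  rw [iteratedDeriv_succ, iteratedDeriv_one, funext (deriv_quadratic a b c)]
  simp

section Bivariate

variable (a b c d e f : ℝ)

theorem quadratic_slice_fst (y : ℝ) :
    (fun x => a + b * x + c * y + d * x ^ 2 + e * y ^ 2 + f * x * y)
      = fun x => (a + c * y + e * y ^ 2) + (b + f * y) * x + d * x ^ 2 := by
  funext x; ring

theorem quadratic_slice_snd (x : ℝ) :
    (fun y => a + b * x + c * y + d * x ^ 2 + e * y ^ 2 + f * x * y)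
      = fun y => (a + b * x + d * x ^ 2) + (c + f * x) * y + e * y ^ 2 := by
  funext y; ring

theorem deriv_quadratic_fst (y t : ℝ) :
    deriv (fun x => a + b * x + c * y + d * x ^ 2 + e * y ^ 2 + f * x * y) t
      = b + f * y + 2 * d * t := by
  rw [quadratic_slice_fst, deriv_quadratic]

theorem deriv_quadratic_snd (x t : ℝ) :
    deriv (fun y => a + b * x + c * y + d * x ^ 2 + e * y ^ 2 + f * x * y) t
      = c + f * x + 2 * e * t := by
  rw [quadratic_slice_snd, deriv_quadratic]

theorem iteratedDeriv_two_quadratic_fst (y t : ℝ) :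
    iteratedDeriv 2 (fun x => a + b * x + c * y + d * x ^ 2 + e * y ^ 2 + f * x * y) t
      = 2 * d := by
  rw [quadratic_slice_fst, iteratedDeriv_two_quadratic]

theorem iteratedDeriv_two_quadratic_snd (x t : ℝ) :
    iteratedDeriv 2 (fun y => a + b * x + c * y + d * x ^ 2 + e * y ^ 2 + f * x * y) t
      = 2 * e := by
  rw [quadratic_slice_snd, iteratedDeriv_two_quadratic]

end Bivariate

theorem stmt7_general (c1 c2 c3 c4 c5 c6 : ℝ × ℝ) (d1 d2 d3 csq : ℝ) (v1 v2 q : ℝ → ℝ → ℝ)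
    (hv1 : v1 = fun x y =>
      c1.1 + c2.1 * x + c3.1 * y + c4.1 * x ^ 2 + c5.1 * y ^ 2 + c6.1 * x * y)
    (hv2 : v2 = fun x y =>
      c1.2 + c2.2 * x + c3.2 * y + c4.2 * x ^ 2 + c5.2 * y ^ 2 + c6.2 * x * y)
    (hq : q = fun x y => d1 + d2 * x + d3 * y)
    (η₁ η₂ η₃ ζ₁ ζ₂ ξ₁ ξ₂ ξ₃ : ℝ)
    (hη12 : η₁ ≠ η₂) (hη13 : η₁ ≠ η₃) (hη23 : η₂ ≠ η₃)
    (hζ : ζ₁ ≠ ζ₂) (hξ : ξ₁ ≠ ξ₂) (hξ₃ : ξ₃ ≠ 0)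
    -- (a) Dirichlet conditions at three distinct points on the line
    (ha : ∀ η ∈ ({η₁, η₂, η₃} : Set ℝ), v1 η 0 = 0 ∧ v2 η 0 = 0)
    -- (b) traction (∇v + ∇vᵀ − qI)(0,1)ᵀ = 0 at (ζₖ, 0)
    (hb : ∀ ζ ∈ ({ζ₁, ζ₂} : Set ℝ),
      deriv (fun y => v1 ζ y) 0 + deriv (fun x => v2 x 0) ζ = 0 ∧
      2 * deriv (fun y => v2 ζ y) 0 - q ζ 0 = 0)
    -- (c) divergence-free at (ξ₁,0), (ξ₂,0) and (0,ξ₃)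
    (hc1 : ∀ ξ ∈ ({ξ₁, ξ₂} : Set ℝ),
      deriv (fun x => v1 x 0) ξ + deriv (fun y => v2 ξ y) 0 = 0)
    (hc2 : deriv (fun x => v1 x ξ₃) 0 + deriv (fun y => v2 0 y) ξ₃ = 0)
    -- (d) Δv − c²v − ∇q = 0 at the origin
    (hd1 : iteratedDeriv 2 (fun x => v1 x 0) 0 + iteratedDeriv 2 (fun y => v1 0 y) 0
      - csq * v1 0 0 - deriv (fun x => q x 0) 0 = 0)
    (hd2 : iteratedDeriv 2 (fun x => v2 x 0) 0 + iteratedDeriv 2 (fun y => v2 0 y) 0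
      - csq * v2 0 0 - deriv (fun y => q 0 y) 0 = 0) :
    c1 = 0 ∧ c2 = 0 ∧ c3 = 0 ∧ c4 = 0 ∧ c5 = 0 ∧ c6 = 0 ∧
    d1 = 0 ∧ d2 = 0 ∧ d3 = 0 := by
  obtain ⟨a₁, b₁⟩ := c1
  obtain ⟨a₂, b₂⟩ := c2
  obtain ⟨a₃, b₃⟩ := c3
  obtain ⟨a₄, b₄⟩ := c4
  obtain ⟨a₅, b₅⟩ := c5
  obtain ⟨a₆, b₆⟩ := c6
  subst hv1 hv2 hq
  simp only [Set.mem_insert_iff, Set.mem_singleton_iff, forall_eq_or_imp, forall_eq] at ha hb hc1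
  simp only [deriv_quadratic_fst, deriv_quadratic_snd, iteratedDeriv_two_quadratic_fst,
    iteratedDeriv_two_quadratic_snd] at hb hc1 hc2 hd1 hd2
  simp only [mul_zero, add_zero, ne_eq, OfNat.ofNat_ne_zero, not_false_eq_true, zero_pow,
    deriv_const_add', deriv_const_mul_id'] at ha hb hc1 hc2 hd1 hd2
  obtain ⟨⟨hv1₁, hv2₁⟩, ⟨hv1₂, hv2₂⟩, hv1₃, hv2₃⟩ := ha
  obtain ⟨⟨hshear₁, hnormal₁⟩, hshear₂, hnormal₂⟩ := hb
  obtain ⟨hdiv₁, hdiv₂⟩ := hc1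
  obtain ⟨rfl, rfl, rfl⟩ := quadratic_coeffs_eq_zero hη12 hη13 hη23 hv1₁ hv1₂ hv1₃
  obtain ⟨rfl, rfl, rfl⟩ := quadratic_coeffs_eq_zero hη12 hη13 hη23 hv2₁ hv2₂ hv2₃
  simp only [zero_mul, mul_zero, add_zero, zero_add] at hshear₁ hshear₂ hdiv₁ hdiv₂
  obtain ⟨rfl, rfl⟩ := affine_coeffs_eq_zero hζ hshear₁ hshear₂
  obtain ⟨rfl, rfl⟩ := affine_coeffs_eq_zero hξ hdiv₁ hdiv₂
  simp only [zero_mul, mul_zero, add_zero, zero_sub, neg_eq_zero] at hnormal₁ hnormal₂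
  obtain ⟨rfl, rfl⟩ := affine_coeffs_eq_zero hζ hnormal₁ hnormal₂
  have hb₅ : b₅ = 0 := by simpa [hξ₃] using hc2
  have ha₅ : a₅ = 0 := by simpa using hd1
  subst ha₅ hb₅
  exact ⟨rfl, rfl, rfl, rfl, rfl, rfl, rfl, rfl, by linarith⟩

/-- Kernel-triviality of the 15×15 collocation system for the local Cauchy
problem on the straight interface `y = 0`. -/
theorem stmt7 (c1 c2 c3 c4 c5 c6 : ℝ × ℝ) (d1 d2 d3 csq : ℝ) (hcsq : 0 ≤ csq)
    (v1 v2 q : ℝ → ℝ → ℝ)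
    (hv1 : v1 = fun x y =>
      c1.1 + c2.1 * x + c3.1 * y + c4.1 * x ^ 2 + c5.1 * y ^ 2 + c6.1 * x * y)
    (hv2 : v2 = fun x y =>
      c1.2 + c2.2 * x + c3.2 * y + c4.2 * x ^ 2 + c5.2 * y ^ 2 + c6.2 * x * y)
    (hq : q = fun x y => d1 + d2 * x + d3 * y)
    (η₁ η₂ η₃ ζ₁ ζ₂ ξ₁ ξ₂ ξ₃ : ℝ)
    (hη12 : η₁ ≠ η₂) (hη13 : η₁ ≠ η₃) (hη23 : η₂ ≠ η₃)
    (hζ : ζ₁ ≠ ζ₂) (hξ : ξ₁ ≠ ξ₂) (hξ₃ : ξ₃ ≠ 0)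
    -- (a) Dirichlet conditions at three distinct points on the line
    (ha : ∀ η ∈ ({η₁, η₂, η₃} : Set ℝ), v1 η 0 = 0 ∧ v2 η 0 = 0)
    -- (b) traction (∇v + ∇vᵀ − qI)(0,1)ᵀ = 0 at (ζₖ, 0)
    (hb : ∀ ζ ∈ ({ζ₁, ζ₂} : Set ℝ),
      deriv (fun y => v1 ζ y) 0 + deriv (fun x => v2 x 0) ζ = 0 ∧
      2 * deriv (fun y => v2 ζ y) 0 - q ζ 0 = 0)
    -- (c) divergence-free at (ξ₁,0), (ξ₂,0) and (0,ξ₃)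
    (hc1 : ∀ ξ ∈ ({ξ₁, ξ₂} : Set ℝ),
      deriv (fun x => v1 x 0) ξ + deriv (fun y => v2 ξ y) 0 = 0)
    (hc2 : deriv (fun x => v1 x ξ₃) 0 + deriv (fun y => v2 0 y) ξ₃ = 0)
    -- (d) Δv − c²v − ∇q = 0 at the origin
    (hd1 : iteratedDeriv 2 (fun x => v1 x 0) 0 + iteratedDeriv 2 (fun y => v1 0 y) 0
      - csq * v1 0 0 - deriv (fun x => q x 0) 0 = 0)
    (hd2 : iteratedDeriv 2 (fun x => v2 x 0) 0 + iteratedDeriv 2 (fun y => v2 0 y) 0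
      - csq * v2 0 0 - deriv (fun y => q 0 y) 0 = 0) :
    c1 = 0 ∧ c2 = 0 ∧ c3 = 0 ∧ c4 = 0 ∧ c5 = 0 ∧ c6 = 0 ∧
    d1 = 0 ∧ d2 = 0 ∧ d3 = 0 :=
  stmt7_general c1 c2 c3 c4 c5 c6 d1 d2 d3 csq v1 v2 q hv1 hv2 hq η₁ η₂ η₃ ζ₁ ζ₂ ξ₁ ξ₂ ξ₃ hη12 hη13
    hη23 hζ hξ hξ₃ ha hb hc1 hc2 hd1 hd2
end

section
/- Let A = D − L − U be a square matrix decomposition with D diagonal, L strictly lower triangular, U strictly upper triangular, and suppose A is strictly diagonally dominant by rows. Then D − L is invertible, and the Gauss–Seidel iteration matrix G = (D − L)⁻¹U satisfies ‖G‖_∞ < 1; hence the Gauss–Seidel iteration x^{m+1} = x^m + (D−L)⁻¹(b − A x^m) converges to the unique solution of Ax = b for any initial guess. -/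
/-!
Split `A = M - N` with `M = D - L` the lower triangular part of `A` and `N = U`. The diagonal of
`M` is that of `A`, nonzero by dominance, so `M` is invertible. Row `i` of `M G = N` reads
`a_ii G_ij = N_ij - ∑_{k<i} a_ik G_kj`; writing `p_i`, `q_i` for the absolute sums of row `i` of
`A` left and right of the diagonal, induction over the rows gives
`|a_ii| ∑_j |G_ij| ≤ q_i + p_i γ ≤ |a_ii| γ` with `γ = max_i q_i / (|a_ii| - p_i) < 1`.
So `x ↦ x + M⁻¹ (b - A x) = G x + M⁻¹ b` is a `γ`-contraction for the sup norm, and the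
Banach fixed point theorem gives the unique solution of `A x = b` as the limit of every iteration.
-/

open Finset Function Filter Topology
open scoped NNReal Matrix.Norms.Operator

theorem exists_lt_one_forall_le_mul {ι : Type*} [Finite ι] {q d : ι → ℝ}
    (hq : ∀ i, 0 ≤ q i) (hqd : ∀ i, q i < d i) : ∃ γ : ℝ≥0, γ < 1 ∧ ∀ i, q i ≤ γ * d i := by
  have : Fintype ι := Fintype.ofFinite ι
  have hd (i : ι) : 0 < d i := (hq i).trans_lt (hqd i)
  refine ⟨univ.sup fun i => (q i / d i).toNNReal, ?_, fun i => ?_⟩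
  · refine (Finset.sup_lt_iff zero_lt_one).mpr fun i _ => ?_
    exact Real.toNNReal_lt_one.mpr ((div_lt_one (hd i)).mpr (hqd i))
  · rw [← div_le_iff₀ (hd i)]
    exact (Real.le_coe_toNNReal _).trans
      (NNReal.coe_le_coe.mpr (le_sup (f := fun i => (q i / d i).toNNReal) (mem_univ i)))

namespace Matrix

section Splitting

variable {𝕜 ι : Type*} [NormedField 𝕜] [Fintype ι] [DecidableEq ι]

noncomputable def splittingStep (M A : Matrix ι ι 𝕜) (b x : ι → 𝕜) : ι → 𝕜 :=
  x + M⁻¹ *ᵥ (b - A *ᵥ x)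

variable {M N A : Matrix ι ι 𝕜} {b : ι → 𝕜}

theorem splittingStep_sub (hM : IsUnit M) (x : ι → 𝕜) :
    splittingStep M (M - N) b x = (M⁻¹ * N) *ᵥ x + M⁻¹ *ᵥ b := by
  have hM' : M⁻¹ * M = 1 := nonsing_inv_mul M ((isUnit_iff_isUnit_det M).mp hM)
  simp only [splittingStep, mulVec_sub, sub_mulVec, mulVec_mulVec, hM', one_mulVec]
  abel

theorem isFixedPt_splittingStep_iff (hM : IsUnit M) {x : ι → 𝕜} :
    IsFixedPt (splittingStep M A b) x ↔ A *ᵥ x = b := by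
  have hinj : Injective (M⁻¹ *ᵥ ·) :=
    mulVec_injective_iff_isUnit.mpr (isUnit_nonsing_inv_iff.mpr hM)
  rw [IsFixedPt, splittingStep, add_eq_left, ← mulVec_zero M⁻¹, hinj.eq_iff, sub_eq_zero,
    eq_comm]

theorem contractingWith_splittingStep (hM : IsUnit M) {γ : ℝ≥0} (hγ : γ < 1)
    (hG : ‖M⁻¹ * N‖₊ ≤ γ) : ContractingWith γ (splittingStep M (M - N) b) := by
  refine ⟨hγ, LipschitzWith.of_dist_le_mul fun x y => ?_⟩
  rw [dist_eq_norm, dist_eq_norm, splittingStep_sub hM, splittingStep_sub hM,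
    add_sub_add_right_eq_sub, ← mulVec_sub]
  exact (linfty_opNorm_mulVec _ _).trans (mul_le_mul_of_nonneg_right hG (norm_nonneg _))

theorem exists_unique_tendsto_iterate_splittingStep [CompleteSpace 𝕜] (hM : IsUnit M)
    (hA : M - N = A) {γ : ℝ≥0} (hγ : γ < 1) (hG : ‖M⁻¹ * N‖₊ ≤ γ) :
    ∃ x, A *ᵥ x = b ∧ (∀ y, A *ᵥ y = b → y = x) ∧
      ∀ x₀, Tendsto (fun m => (splittingStep M A b)^[m] x₀) atTop (𝓝 x) := by
  subst hA
  have hf := contractingWith_splittingStep (b := b) hM hγ hG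
  refine ⟨hf.fixedPoint _, (isFixedPt_splittingStep_iff hM).mp hf.fixedPoint_isFixedPt,
    fun y hy => hf.fixedPoint_unique ((isFixedPt_splittingStep_iff hM).mpr hy),
    hf.tendsto_iterate_fixedPoint⟩

end Splitting

theorem linfty_opNNNorm_le_of_forall_sum_abs_le {m n : Type*} [Fintype m] [Fintype n]
    {G : Matrix m n ℝ} {γ : ℝ≥0} (h : ∀ i, ∑ j, |G i j| ≤ γ) : ‖G‖₊ ≤ γ := by
  rw [linfty_opNNNorm_def]
  refine Finset.sup_le fun i _ => ?_
  rw [← NNReal.coe_le_coe, NNReal.coe_sum]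
  simpa only [coe_nnnorm, Real.norm_eq_abs] using h i

section GaussSeidel

variable {ι : Type*} [LinearOrder ι]

/-- The Gauss–Seidel splitting `A = (D - L) - U`: `splitLower A = D - L`, `splitUpper A = U`. -/
def splitLower {R : Type*} [Zero R] (A : Matrix ι ι R) : Matrix ι ι R :=
  of fun i j => if j ≤ i then A i j else 0

def splitUpper {R : Type*} [Zero R] [Neg R] (A : Matrix ι ι R) : Matrix ι ι R :=
  of fun i j => if i < j then -A i j else 0

theorem splitLower_sub_splitUpper {R : Type*} [AddGroup R] (A : Matrix ι ι R) :
    splitLower A - splitUpper A = A := by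
  ext i j
  rcases lt_or_ge i j with h | h
  · simp [splitLower, splitUpper, h, h.not_ge]
  · simp [splitLower, splitUpper, h, h.not_gt]

theorem isLowerTriangular_splitLower {R : Type*} [Zero R] (A : Matrix ι ι R) :
    (splitLower A).IsLowerTriangular :=
  fun _ _ h => if_neg (not_le.mpr h)

variable [Fintype ι]

theorem det_splitLower {R : Type*} [CommRing R] (A : Matrix ι ι R) :
    (splitLower A).det = ∏ i, A i i := by
  rw [det_of_isLowerTriangular _ (isLowerTriangular_splitLower A)]
  simp [splitLower]

def IsStrictlyRowDiagDominant (A : Matrix ι ι ℝ) : Prop :=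
  ∀ i, ∑ j ∈ univ.erase i, |A i j| < |A i i|

def lowerAbsSum (A : Matrix ι ι ℝ) (i : ι) : ℝ :=
  ∑ k ∈ univ.filter (· < i), |A i k|

def upperAbsSum (A : Matrix ι ι ℝ) (i : ι) : ℝ :=
  ∑ k ∈ univ.filter (i < ·), |A i k|

theorem lowerAbsSum_nonneg (A : Matrix ι ι ℝ) (i : ι) : 0 ≤ lowerAbsSum A i :=
  sum_nonneg fun _ _ => abs_nonneg _

theorem upperAbsSum_nonneg (A : Matrix ι ι ℝ) (i : ι) : 0 ≤ upperAbsSum A i :=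
  sum_nonneg fun _ _ => abs_nonneg _

theorem lowerAbsSum_add_upperAbsSum (A : Matrix ι ι ℝ) (i : ι) :
    lowerAbsSum A i + upperAbsSum A i = ∑ j ∈ univ.erase i, |A i j| := by
  rw [lowerAbsSum, upperAbsSum, ← sum_union]
  · congr 1
    ext k
    simp [lt_or_lt_iff_ne, eq_comm]
  · exact disjoint_filter.mpr fun k _ hki hik => lt_asymm hki hik

theorem sum_abs_splitUpper (A : Matrix ι ι ℝ) (i : ι) :
    ∑ j, |splitUpper A i j| = upperAbsSum A i := by
  rw [upperAbsSum, sum_filter]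
  exact sum_congr rfl fun j _ => by by_cases h : i < j <;> simp [splitUpper, h]

theorem diag_mul_of_splitLower_mul_eq {R : Type*} [CommRing R] {A G B : Matrix ι ι R}
    (hG : splitLower A * G = B) (i j : ι) :
    A i i * G i j = B i j - ∑ k ∈ univ.filter (· < i), A i k * G k j := by
  have hle : univ.filter (· ≤ i) = insert i (univ.filter (· < i)) := by
    ext k
    simp [le_iff_eq_or_lt]
  rw [eq_sub_iff_add_eq, ← hG, mul_apply, ← sum_insert (f := fun k => A i k * G k j) (by simp),
    ← hle, sum_filter]
  exact sum_congr rfl fun k _ => by by_cases h : k ≤ i <;> simp [splitLower, h]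

theorem abs_diag_mul_sum_abs_le_of_splitLower_mul_eq {A G : Matrix ι ι ℝ}
    (hG : splitLower A * G = splitUpper A) (i : ι) :
    |A i i| * ∑ j, |G i j| ≤
      upperAbsSum A i + ∑ k ∈ univ.filter (· < i), |A i k| * ∑ j, |G k j| := by
  have hrow (j : ι) : |A i i| * |G i j| ≤
      |splitUpper A i j| + ∑ k ∈ univ.filter (· < i), |A i k| * |G k j| := by
    rw [← abs_mul, diag_mul_of_splitLower_mul_eq hG]
    refine (abs_sub _ _).trans ?_
    gcongr
    exact (abs_sum_le_sum_abs _ _).trans_eq (by simp only [abs_mul])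
  calc |A i i| * ∑ j, |G i j|
      ≤ ∑ j, (|splitUpper A i j| + ∑ k ∈ univ.filter (· < i), |A i k| * |G k j|) := by
        rw [mul_sum]
        exact sum_le_sum fun j _ => hrow j
    _ = upperAbsSum A i + ∑ k ∈ univ.filter (· < i), |A i k| * ∑ j, |G k j| := by
        simp only [sum_add_distrib, sum_abs_splitUpper, mul_sum]
        rw [sum_comm]

namespace IsStrictlyRowDiagDominant

variable {A : Matrix ι ι ℝ}

theorem upperAbsSum_lt (hA : IsStrictlyRowDiagDominant A) (i : ι) :
    upperAbsSum A i < |A i i| - lowerAbsSum A i := by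
  linarith [hA i, lowerAbsSum_add_upperAbsSum A i]

theorem diag_ne_zero (hA : IsStrictlyRowDiagDominant A) (i : ι) : A i i ≠ 0 :=
  abs_pos.mp (by linarith [hA.upperAbsSum_lt i, upperAbsSum_nonneg A i, lowerAbsSum_nonneg A i])

theorem isUnit_splitLower (hA : IsStrictlyRowDiagDominant A) : IsUnit (splitLower A) := by
  rw [isUnit_iff_isUnit_det, det_splitLower, isUnit_iff_ne_zero]
  exact prod_ne_zero_iff.mpr fun i _ => hA.diag_ne_zero i

theorem exists_contraction_factor (hA : IsStrictlyRowDiagDominant A) :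
    ∃ γ : ℝ≥0, γ < 1 ∧ ∀ i, upperAbsSum A i ≤ γ * (|A i i| - lowerAbsSum A i) :=
  exists_lt_one_forall_le_mul (upperAbsSum_nonneg A) hA.upperAbsSum_lt

theorem sum_abs_le_of_splitLower_mul_eq (hA : IsStrictlyRowDiagDominant A) {γ : ℝ≥0}
    (hγ : ∀ i, upperAbsSum A i ≤ γ * (|A i i| - lowerAbsSum A i)) {G : Matrix ι ι ℝ}
    (hG : splitLower A * G = splitUpper A) (i : ι) : ∑ j, |G i j| ≤ γ := by
  induction i using WellFoundedLT.induction with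
  | _ i ih =>
    have hpos : 0 < |A i i| := abs_pos.mpr (hA.diag_ne_zero i)
    refine le_of_mul_le_mul_left ?_ hpos
    calc |A i i| * ∑ j, |G i j|
        ≤ upperAbsSum A i + ∑ k ∈ univ.filter (· < i), |A i k| * ∑ j, |G k j| :=
          abs_diag_mul_sum_abs_le_of_splitLower_mul_eq hG i
      _ ≤ γ * (|A i i| - lowerAbsSum A i) + ∑ k ∈ univ.filter (· < i), |A i k| * γ := by
          gcongr with k hk
          exacts [hγ i, ih k (mem_filter.mp hk).2]
      _ = |A i i| * γ := by
          rw [lowerAbsSum, ← sum_mul]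
          ring

end IsStrictlyRowDiagDominant

end GaussSeidel

end Matrix

open Matrix

/-- Gauss–Seidel convergence for strictly row-diagonally dominant matrices. -/
theorem stmt18 {n : ℕ} (A D L U : Matrix (Fin n) (Fin n) ℝ)
    (hdom : ∀ i, (∑ j ∈ Finset.univ.erase i, |A i j|) < |A i i|)
    (hD : ∀ i j, D i j = if i = j then A i i else 0)
    (hL : ∀ i j, L i j = if j < i then -(A i j) else 0)
    (hU : ∀ i j, U i j = if i < j then -(A i j) else 0)
    (b : Fin n → ℝ) :
    IsUnit (D - L) ∧
    (∃ γ : ℝ, γ < 1 ∧ ∀ i, (∑ j, |((D - L)⁻¹ * U) i j|) ≤ γ) ∧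
    ∃ xsol : Fin n → ℝ, A.mulVec xsol = b ∧ (∀ y, A.mulVec y = b → y = xsol) ∧
      ∀ x0 : Fin n → ℝ,
        Filter.Tendsto
          (fun m => (fun x => x + (D - L)⁻¹.mulVec (b - A.mulVec x))^[m] x0)
          Filter.atTop (nhds xsol) := by
  have hA : IsStrictlyRowDiagDominant A := hdom
  have hDL : D - L = splitLower A := by
    ext i j
    rcases lt_trichotomy i j with h | rfl | h
    · simp [hD, hL, splitLower, h.ne, h.not_gt, h.not_ge]
    · simp [hD, hL, splitLower]
    · simp [hD, hL, splitLower, h.ne', h, h.le]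
  have hUA : U = splitUpper A := by
    ext i j
    simp [hU, splitUpper]
  rw [hDL, hUA]
  have hM := hA.isUnit_splitLower
  obtain ⟨γ, hγ1, hγ⟩ := hA.exists_contraction_factor
  have hrow := hA.sum_abs_le_of_splitLower_mul_eq hγ
    (mul_nonsing_inv_cancel_left _ _ ((isUnit_iff_isUnit_det _).mp hM))
  exact ⟨hM, ⟨γ, hγ1, hrow⟩, exists_unique_tendsto_iterate_splittingStep hM
    (splitLower_sub_splitUpper A) hγ1 (linfty_opNNNorm_le_of_forall_sum_abs_le hrow)⟩
end
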